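/- Let N be a finite set with a symmetric valuation v, let a ∈ N, and suppose v i j ≤ 0 whenever a ∉ {i, j}. Let W = max_{d ∈ N, d ≠ a} v a d and assume W ≥ 0. Then every matching μ of N satisfies SW(μ) ≤ W, and there exists a matching of N with social welfare exactly W. In other words, the maximum weight matching of a star instance consists of the heaviest edge at the center (all other agents remaining singletons). -/

import Mathlib

open Finset

/-!
A part of a matching has at most two agents, so its welfare is `0` or a single valuation
`v i j`. Every pair of agents is worth at most `W` (pairs avoiding `a` are worth `≤ 0 ≤ W`),
so the part containing `a` contributes at most `W`, and every other part at most `0`.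
Conversely, pairing `a` with a maximiser `d` and leaving everybody else alone attains `W`.
-/

/-- Social welfare of a coalition `C`: `SW(C) = (Σ_{i∈C} Σ_{j∈C, j≠i} v i j) / |C|`. -/
noncomputable def coalSW {α : Type*} [DecidableEq α] (v : α → α → ℝ) (C : Finset α) : ℝ :=
  (∑ i ∈ C, ∑ j ∈ C.erase i, v i j) / (C.card : ℝ)

/-- Social welfare of a partition: the sum of the social welfares of its parts.
For a matching and a symmetric valuation with zero diagonal, this equals the sum of
`v i j` over its two-element parts `{i, j}`. -/
noncomputable def partSW {α : Type*} [DecidableEq α] (v : α → α → ℝ) {N : Finset α}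
    (π : Finpartition N) : ℝ :=
  ∑ C ∈ π.parts, coalSW v C

def IsMatching {α : Type*} [DecidableEq α] {N : Finset α} (π : Finpartition N) : Prop :=
  ∀ p ∈ π.parts, p.card ≤ 2

section CoalitionWelfare

variable {α : Type*} [DecidableEq α] (v : α → α → ℝ)

@[simp]
lemma coalSW_singleton (i : α) : coalSW v {i} = 0 := by
  simp [coalSW]

lemma coalSW_pair (hsymm : ∀ i j, v i j = v j i) {i j : α} (hij : i ≠ j) :
    coalSW v {i, j} = v i j := by
  have hi : ({i, j} : Finset α).erase i = {j} := erase_insert (by simp [hij])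
  have hj : ({i, j} : Finset α).erase j = {i} := by
    rw [pair_comm]; exact erase_insert (by simp [hij.symm])
  rw [coalSW, sum_pair hij, hi, hj, card_pair hij]
  simp [hsymm j i]

lemma coalSW_le_of_card_le_two (hsymm : ∀ i j, v i j = v j i) {p : Finset α}
    (hp : #p ≤ 2) {b : ℝ} (hb : 0 ≤ b) (hpairs : ∀ i ∈ p, ∀ j ∈ p, i ≠ j → v i j ≤ b) :
    coalSW v p ≤ b := by
  interval_cases h : #p
  · simp [card_eq_zero.mp h, coalSW, hb]
  · obtain ⟨i, rfl⟩ := card_eq_one.mp h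
    simpa using hb
  · obtain ⟨i, j, hij, rfl⟩ := card_eq_two.mp h
    rw [coalSW_pair v hsymm hij]
    exact hpairs i (by simp) j (by simp) hij

end CoalitionWelfare

namespace Finpartition

variable {α : Type*} [DecidableEq α] {N : Finset α}

lemma partSW_le_coalSW_part (v : α → α → ℝ) (μ : Finpartition N) (a : α)
    (hrest : ∀ p ∈ μ.parts, a ∉ p → coalSW v p ≤ 0) :
    partSW v μ ≤ coalSW v (μ.part a) := by
  by_cases ha : a ∈ N
  · rw [partSW, ← add_sum_erase _ _ (μ.part_mem.2 ha)]
    refine add_le_of_nonpos_right (sum_nonpos fun p hp ↦ hrest p (mem_of_mem_erase hp) ?_)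
    exact fun hap ↦ ne_of_mem_erase hp (μ.part_eq_of_mem (mem_of_mem_erase hp) hap).symm
  · rw [partSW, μ.part_eq_empty.2 ha]
    simpa [coalSW] using sum_nonpos fun p hp ↦ hrest p hp fun hap ↦ ha (μ.le hp hap)

def blockWithSingletons (t : Finset α) (ht : t.Nonempty) (htN : t ⊆ N) : Finpartition N :=
  (⊥ : Finpartition (N \ t)).extend ht.ne_empty sdiff_disjoint (sdiff_union_of_subset htN)

variable {t : Finset α} (ht : t.Nonempty) (htN : t ⊆ N)

lemma isMatching_blockWithSingletons (ht2 : #t ≤ 2) :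
    IsMatching (blockWithSingletons t ht htN) := by
  intro p hp
  rcases mem_insert.1 hp with rfl | hp
  · exact ht2
  · obtain ⟨x, -, rfl⟩ := mem_bot_iff.1 hp
    simp

lemma partSW_blockWithSingletons (v : α → α → ℝ) :
    partSW v (blockWithSingletons t ht htN) = coalSW v t := by
  have ht_notMem : t ∉ (⊥ : Finpartition (N \ t)).parts := by
    rw [mem_bot_iff]
    rintro ⟨x, hx, rfl⟩
    exact (mem_sdiff.1 hx).2 (mem_singleton_self x)
  rw [partSW, blockWithSingletons, extend_parts, sum_insert ht_notMem, parts_bot]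
  simp

end Finpartition

theorem stmt11_general {α : Type*} [DecidableEq α] (N : Finset α) (v : α → α → ℝ)
    (hsymm : ∀ i j, v i j = v j i)
    (a : α) (ha : a ∈ N)
    (hneg : ∀ i ∈ N, ∀ j ∈ N, i ≠ a → j ≠ a → v i j ≤ 0)
    (W : ℝ) (hWmem : ∃ d ∈ N.erase a, v a d = W)
    (hWub : ∀ d ∈ N.erase a, v a d ≤ W) (hW0 : 0 ≤ W) :
    (∀ μ : Finpartition N, IsMatching μ → partSW v μ ≤ W) ∧
    (∃ μ : Finpartition N, IsMatching μ ∧ partSW v μ = W) := by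
  have hpair_le : ∀ i ∈ N, ∀ j ∈ N, i ≠ j → v i j ≤ W := by
    intro i hi j hj hij
    by_cases hia : i = a
    · subst hia; exact hWub j (mem_erase.2 ⟨hij.symm, hj⟩)
    by_cases hja : j = a
    · subst hja; rw [hsymm]; exact hWub i (mem_erase.2 ⟨hij, hi⟩)
    exact (hneg i hi j hj hia hja).trans hW0
  refine ⟨fun μ hμ ↦ ?_, ?_⟩
  · have hrest : ∀ p ∈ μ.parts, a ∉ p → coalSW v p ≤ 0 := fun p hp hap ↦
      coalSW_le_of_card_le_two v hsymm (hμ p hp) le_rfl fun i hi j hj hij ↦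
        hneg i (μ.le hp hi) j (μ.le hp hj) (ne_of_mem_of_not_mem hi hap)
          (ne_of_mem_of_not_mem hj hap)
    refine (μ.partSW_le_coalSW_part v a hrest).trans ?_
    exact coalSW_le_of_card_le_two v hsymm (hμ _ (μ.part_mem.2 ha)) hW0 fun i hi j hj ↦
      hpair_le i (μ.part_subset a hi) j (μ.part_subset a hj)
  · obtain ⟨d, hd, rfl⟩ := hWmem
    have hda := ne_of_mem_erase hd
    have htN : {a, d} ⊆ N := insert_subset ha (singleton_subset_iff.2 (mem_of_mem_erase hd))
    refine ⟨_, Finpartition.isMatching_blockWithSingletons (insert_nonempty a {d}) htN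
      card_le_two, ?_⟩
    rw [Finpartition.partSW_blockWithSingletons, coalSW_pair v hsymm hda.symm]

/-- Maximum weight matchings in star instances: if all valuations not involving the
center `a` are nonpositive and `W ≥ 0` is the maximum valuation `v a d` over
`d ∈ N \ {a}`, then every matching of `N` has social welfare at most `W`, and some
matching of `N` has social welfare exactly `W`. -/
theorem stmt11 {α : Type*} [DecidableEq α] (N : Finset α) (v : α → α → ℝ)
    (hsymm : ∀ i j, v i j = v j i) (hdiag : ∀ i, v i i = 0)
    (a : α) (ha : a ∈ N)
    (hneg : ∀ i ∈ N, ∀ j ∈ N, i ≠ a → j ≠ a → v i j ≤ 0)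
    (W : ℝ) (hWmem : ∃ d ∈ N.erase a, v a d = W)
    (hWub : ∀ d ∈ N.erase a, v a d ≤ W) (hW0 : 0 ≤ W) :
    (∀ μ : Finpartition N, IsMatching μ → partSW v μ ≤ W) ∧
    (∃ μ : Finpartition N, IsMatching μ ∧ partSW v μ = W) :=
  stmt11_general N v hsymm a ha hneg W hWmem hWub hW0
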